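/- arXiv:2008.07258 — 3 statements merged into one kernel-verified Lean document; each statement's English description precedes it below -/
import Mathlib

section
/- Let X be a normed space (over ℝ or ℂ), let ε > 0, and let x, y ∈ X be ε-quasi-codirected, i.e. ‖x + y‖ ≥ ‖x‖ + ‖y‖ − ε. Then for every pair of positive real numbers a, b, the elements ax and by are (ε·max{a, b})-quasi-codirected, i.e. ‖ax + by‖ ≥ a‖x‖ + b‖y‖ − ε·max{a, b}. -/
/-- If `x` and `y` are `ε`-quasi-codirected (that is, `‖x + y‖ ≥ ‖x‖ + ‖y‖ - ε`), then for
all positive reals `a, b` the elements `a • x` and `b • y` are `ε * max a b`-quasi-codirected. -/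
theorem quasi_codirected_smul {𝕜 : Type*} [RCLike 𝕜] {X : Type*}
    [NormedAddCommGroup X] [NormedSpace 𝕜 X]
    (ε : ℝ) (hε : 0 < ε) (x y : X) (hxy : ‖x + y‖ ≥ ‖x‖ + ‖y‖ - ε)
    (a b : ℝ) (ha : 0 < a) (hb : 0 < b) :
    ‖(a : 𝕜) • x + (b : 𝕜) • y‖ ≥ a * ‖x‖ + b * ‖y‖ - ε * max a b := by
  set m := max a b with hm
  have hma : a ≤ m := le_max_left a b
  have hmb : b ≤ m := le_max_right a b
  have hm0 : 0 ≤ m := le_trans ha.le hma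
  have h1 : (a : 𝕜) • x + (b : 𝕜) • y
      = (m : 𝕜) • (x + y) - ((m - a : ℝ) : 𝕜) • x - ((m - b : ℝ) : 𝕜) • y := by
    push_cast
    module
  have h2 : ‖(a : 𝕜) • x + (b : 𝕜) • y‖
      ≥ ‖(m : 𝕜) • (x + y)‖ - ‖((m - a : ℝ) : 𝕜) • x‖ - ‖((m - b : ℝ) : 𝕜) • y‖ := by
    rw [h1]
    have := norm_sub_norm_le ((m : 𝕜) • (x + y) - ((m - a : ℝ) : 𝕜) • x)
      (((m - b : ℝ) : 𝕜) • y)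
    have := norm_sub_norm_le ((m : 𝕜) • (x + y)) (((m - a : ℝ) : 𝕜) • x)
    linarith
  rw [norm_smul, norm_smul, norm_smul, RCLike.norm_ofReal, RCLike.norm_ofReal,
    RCLike.norm_ofReal, abs_of_nonneg hm0, abs_of_nonneg (by linarith : (0:ℝ) ≤ m - a),
    abs_of_nonneg (by linarith : (0:ℝ) ≤ m - b)] at h2
  nlinarith [norm_nonneg x, norm_nonneg y, mul_le_mul_of_nonneg_left hxy hm0]
end

section
/- Let X be a Banach space with the diametral strong diameter two property (DSD2P). Then X satisfies the slice characterization of the Daugavet property: for every norm-one functional x* ∈ X*, every α > 0, every ε > 0 and every x in the unit sphere S_X, there exists s ∈ B_X with Re x*(s) > 1 − α and ‖x − s‖ > 2 − ε. -/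
open Set

/-- The ballSlice `S(f, α)` of the closed unit ball of `X` determined by a functional `f`
and `α > 0`: the set of points `x` of the closed unit ball with `Re (f x) > 1 - α`. -/
def ballSlice {𝕜 : Type*} [RCLike 𝕜] {X : Type*} [NormedAddCommGroup X] [NormedSpace 𝕜 X]
    (f : X →L[𝕜] 𝕜) (α : ℝ) : Set X :=
  {x : X | ‖x‖ ≤ 1 ∧ 1 - α < RCLike.re (f x)}

/-- `C` is a convex combination of slices of the closed unit ball of `X`:
`C = λ₁ S₁ + ⋯ + λₙ Sₙ` where `n ≥ 1`, each `Sᵢ = S(fᵢ, αᵢ)` is a ballSlice (with `‖fᵢ‖ = 1`,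
`αᵢ > 0`), each `λᵢ > 0` and `∑ λᵢ = 1`. -/
def IsConvexCombOfSlices {𝕜 : Type*} [RCLike 𝕜] (X : Type*) [NormedAddCommGroup X]
    [NormedSpace 𝕜 X] (C : Set X) : Prop :=
  ∃ (n : ℕ), 0 < n ∧ ∃ (f : Fin n → (X →L[𝕜] 𝕜)) (α lam : Fin n → ℝ),
    (∀ i, ‖f i‖ = 1) ∧ (∀ i, 0 < α i) ∧ (∀ i, 0 < lam i) ∧ (∑ i, lam i) = 1 ∧
    C = {x : X | ∃ y : Fin n → X, (∀ i, y i ∈ ballSlice (f i) (α i)) ∧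
      x = ∑ i, (lam i : 𝕜) • y i}

/-- `X` has the diametral strong diameter two property (DSD2P): for every convex
combination of slices `C` of the closed unit ball, every `δ > 0` and every `x ∈ C`,
there is `y ∈ C` with `‖x - y‖ > 1 + ‖x‖ - δ`. -/
def DSD2P (𝕜 : Type*) [RCLike 𝕜] (X : Type*) [NormedAddCommGroup X]
    [NormedSpace 𝕜 X] : Prop :=
  ∀ C : Set X, IsConvexCombOfSlices (𝕜 := 𝕜) X C →
    ∀ δ > (0 : ℝ), ∀ x ∈ C, ∃ y ∈ C, ‖x - y‖ > 1 + ‖x‖ - δ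

/-!
Let `g` norm `x`, so that `x ∈ S(g, α)`, pick `s₀ ∈ S(f, α)` and a small weight `t`. The point
`z = (1 - t) x + t s₀` lies in the convex combination of slices `(1 - t) S(g, α) + t S(f, α)` and
has norm at least `1 - 2t`. The DSD2P gives `y = (1 - t) u + t s` in the same set with
`‖z - y‖ > 1 + ‖z‖ - δ`, and a functional `φ` of norm at most one norming `z - y` then almost
norms both `z` and `-y`. Hence `Re φ x > 1 - 4t - δ`, and, because `s` carries weight `t` in `y`,
`-Re φ s > 1 - δ / t`. With `δ = t²` this gives `‖x - s‖ ≥ Re φ (x - s) > 2 - 5t - t²`.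
-/

open scoped Pointwise
open RCLike

section

variable {𝕜 : Type*} [RCLike 𝕜] {X : Type*} [NormedAddCommGroup X] [NormedSpace 𝕜 X]

lemma re_apply_le_norm_of_opNorm_le_one {φ : X →L[𝕜] 𝕜} (hφ : ‖φ‖ ≤ 1) (v : X) :
    re (φ v) ≤ ‖v‖ :=
  calc re (φ v) ≤ ‖φ v‖ := re_le_norm _
    _ ≤ ‖φ‖ * ‖v‖ := φ.le_opNorm v
    _ ≤ ‖v‖ := mul_le_of_le_one_left (norm_nonneg v) hφ

lemma neg_re_apply_le_norm_of_opNorm_le_one {φ : X →L[𝕜] 𝕜} (hφ : ‖φ‖ ≤ 1) (v : X) :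
    -re (φ v) ≤ ‖v‖ := by
  simpa using re_apply_le_norm_of_opNorm_le_one hφ (-v)

lemma re_apply_ofReal_smul_add_ofReal_smul (φ : X →L[𝕜] 𝕜) (a b : ℝ) (u v : X) :
    re (φ ((a : 𝕜) • u + (b : 𝕜) • v)) = a * re (φ u) + b * re (φ v) := by
  simp

lemma norm_ofReal_smul_add_ofReal_smul_le_one {u v : X} (hu : ‖u‖ ≤ 1) (hv : ‖v‖ ≤ 1) {t : ℝ}
    (ht₀ : 0 ≤ t) (ht₁ : t ≤ 1) : ‖((1 - t : ℝ) : 𝕜) • u + (t : 𝕜) • v‖ ≤ 1 :=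
  calc ‖((1 - t : ℝ) : 𝕜) • u + (t : 𝕜) • v‖ ≤ (1 - t) * ‖u‖ + t * ‖v‖ := by
        refine (norm_add_le _ _).trans_eq ?_
        rw [norm_smul, norm_smul, norm_ofReal, norm_ofReal, abs_of_nonneg ht₀,
          abs_of_nonneg (sub_nonneg.2 ht₁)]
    _ ≤ (1 - t) * 1 + t * 1 := by gcongr
    _ = 1 := by ring

lemma ballSlice_nonempty {f : X →L[𝕜] 𝕜} (hf : ‖f‖ = 1) {α : ℝ} (hα : 0 < α) :
    (ballSlice f α).Nonempty := by
  obtain ⟨v, hv, hfv⟩ := f.exists_lt_apply_of_lt_opNorm (r := 1 - α) (by linarith)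
  obtain ⟨c, hc, hcfv⟩ := exists_norm_eq_mul_self (f v)
  refine ⟨c • v, by simpa [norm_smul, hc] using hv.le, ?_⟩
  rwa [map_smul, smul_eq_mul, ← hcfv, ofReal_re]

lemma mem_ballSlice_of_apply_eq_norm {g : X →L[𝕜] 𝕜} {x : X} (hx : ‖x‖ = 1)
    (hgx : g x = ‖x‖) {α : ℝ} (hα : 0 < α) : x ∈ ballSlice g α :=
  ⟨hx.le, by rw [hgx, ofReal_re, hx]; linarith⟩

lemma isConvexCombOfSlices_pair {g f : X →L[𝕜] 𝕜} (hg : ‖g‖ = 1) (hf : ‖f‖ = 1) {α β : ℝ}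
    (hα : 0 < α) (hβ : 0 < β) {t : ℝ} (ht₀ : 0 < t) (ht₁ : t < 1) :
    IsConvexCombOfSlices (𝕜 := 𝕜) X (((1 - t : ℝ) : 𝕜) • ballSlice g α + (t : 𝕜) • ballSlice f β) := by
  refine ⟨2, two_pos, ![g, f], ![α, β], ![1 - t, t], Fin.forall_fin_two.2 ⟨hg, hf⟩,
    Fin.forall_fin_two.2 ⟨hα, hβ⟩, Fin.forall_fin_two.2 ⟨sub_pos.2 ht₁, ht₀⟩, by simp, ?_⟩
  ext w
  simp only [mem_add, mem_smul_set, Fin.forall_fin_two, Fin.sum_univ_two, mem_ofPred_eq]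
  constructor
  · rintro ⟨_, ⟨u, hu, rfl⟩, _, ⟨v, hv, rfl⟩, rfl⟩
    exact ⟨![u, v], ⟨hu, hv⟩, rfl⟩
  · rintro ⟨y, ⟨hy₀, hy₁⟩, rfl⟩
    exact ⟨_, ⟨y 0, hy₀, rfl⟩, _, ⟨y 1, hy₁, rfl⟩, rfl⟩

lemma exists_norming_of_lt_norm_sub {a b : X} (hb : ‖b‖ ≤ 1) {η : ℝ}
    (h : 1 + ‖a‖ - η < ‖a - b‖) :
    ∃ φ : X →L[𝕜] 𝕜, ‖φ‖ ≤ 1 ∧ ‖a‖ - η < re (φ a) ∧ 1 - η < -re (φ b) := by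
  obtain ⟨φ, hφ, hφab⟩ := exists_dual_vector'' 𝕜 (a - b)
  have hsplit : re (φ a) - re (φ b) = ‖a - b‖ := by
    rw [← map_sub, ← map_sub, hφab, ofReal_re]
  refine ⟨φ, hφ, ?_, ?_⟩ <;>
    linarith [re_apply_le_norm_of_opNorm_le_one hφ a, neg_re_apply_le_norm_of_opNorm_le_one hφ b]

lemma lt_re_apply_of_lt_re_apply_ofReal_smul_add {φ : X →L[𝕜] 𝕜} (hφ : ‖φ‖ ≤ 1) {x v : X}
    (hx : ‖x‖ = 1) (hv : ‖v‖ ≤ 1) {t η : ℝ} (ht₀ : 0 ≤ t)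
    (h : ‖((1 - t : ℝ) : 𝕜) • x + (t : 𝕜) • v‖ - η <
      re (φ (((1 - t : ℝ) : 𝕜) • x + (t : 𝕜) • v))) :
    1 - 4 * t - η < re (φ x) := by
  have hnorm : 1 - 2 * t ≤ ‖((1 - t : ℝ) : 𝕜) • x + (t : 𝕜) • v‖ := by
    have hdiff : x - (((1 - t : ℝ) : 𝕜) • x + (t : 𝕜) • v) = (t : 𝕜) • (x - v) := by
      push_cast; module
    have := norm_sub_norm_le x (((1 - t : ℝ) : 𝕜) • x + (t : 𝕜) • v)
    rw [hdiff, norm_smul, norm_ofReal, abs_of_nonneg ht₀] at this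
    nlinarith [norm_sub_le x v]
  rw [re_apply_ofReal_smul_add_ofReal_smul] at h
  have hv' : t * re (φ v) ≤ t :=
    mul_le_of_le_one_right ht₀ ((re_apply_le_norm_of_opNorm_le_one hφ v).trans hv)
  have hx' : -t ≤ t * re (φ x) := by
    nlinarith [neg_re_apply_le_norm_of_opNorm_le_one hφ x]
  linarith

lemma lt_neg_re_apply_of_lt_neg_re_apply_ofReal_smul_add {φ : X →L[𝕜] 𝕜} (hφ : ‖φ‖ ≤ 1)
    {u s : X} (hu : ‖u‖ ≤ 1) {t η : ℝ} (ht₀ : 0 < t) (ht₁ : t ≤ 1)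
    (h : 1 - η < -re (φ (((1 - t : ℝ) : 𝕜) • u + (t : 𝕜) • s))) :
    1 - η / t < -re (φ s) := by
  rw [re_apply_ofReal_smul_add_ofReal_smul] at h
  have hu' : (1 - t) * -re (φ u) ≤ 1 - t :=
    mul_le_of_le_one_right (sub_nonneg.2 ht₁)
      ((neg_re_apply_le_norm_of_opNorm_le_one hφ u).trans hu)
  have : (1 + re (φ s)) * t < η := by linarith
  linarith [(lt_div_iff₀ ht₀).2 this]

end

theorem dsd2p_implies_slice_daugavet_general {𝕜 : Type*} [RCLike 𝕜] {X : Type*}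
    [NormedAddCommGroup X] [NormedSpace 𝕜 X]
    (h : DSD2P 𝕜 X) (f : X →L[𝕜] 𝕜) (hf : ‖f‖ = 1) (α : ℝ) (hα : 0 < α)
    (ε : ℝ) (hε : 0 < ε) (x : X) (hx : ‖x‖ = 1) :
    ∃ s : X, ‖s‖ ≤ 1 ∧ 1 - α < RCLike.re (f s) ∧ 2 - ε < ‖x - s‖ := by
  set t := min (ε / 8) (1 / 2)
  have ht₀ : 0 < t := by positivity
  have ht₁ : t ≤ 1 / 2 := min_le_right _ _
  obtain ⟨g, hg, hgx⟩ := exists_dual_vector 𝕜 x (by simp [hx])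
  obtain ⟨s₀, hs₀⟩ := ballSlice_nonempty hf hα
  have hz : ((1 - t : ℝ) : 𝕜) • x + (t : 𝕜) • s₀ ∈
      ((1 - t : ℝ) : 𝕜) • ballSlice g α + (t : 𝕜) • ballSlice f α :=
    add_mem_add (smul_mem_smul_set (mem_ballSlice_of_apply_eq_norm hx hgx hα))
      (smul_mem_smul_set hs₀)
  obtain ⟨_, ⟨_, ⟨u, hu, rfl⟩, _, ⟨s, hs, rfl⟩, rfl⟩, hfar⟩ :=
    h _ (isConvexCombOfSlices_pair hg hf hα hα ht₀ (by linarith)) (t ^ 2) (by positivity) _ hz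
  obtain ⟨φ, hφ, hφz, hφy⟩ := exists_norming_of_lt_norm_sub (𝕜 := 𝕜)
    (norm_ofReal_smul_add_ofReal_smul_le_one hu.1 hs.1 ht₀.le (by linarith)) hfar
  have hφx := lt_re_apply_of_lt_re_apply_ofReal_smul_add hφ hx hs₀.1 ht₀.le hφz
  have hφs := lt_neg_re_apply_of_lt_neg_re_apply_ofReal_smul_add hφ hu.1 ht₀ (by linarith) hφy
  refine ⟨s, hs.1, hs.2, ?_⟩
  have htt : t ^ 2 / t = t := by field_simp
  calc 2 - ε < (1 - 4 * t - t ^ 2) + (1 - t ^ 2 / t) := by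
        rw [htt]; nlinarith [min_le_left (ε / 8) (1 / 2)]
    _ < re (φ x) - re (φ s) := by linarith
    _ = re (φ (x - s)) := by rw [map_sub, map_sub]
    _ ≤ ‖x - s‖ := re_apply_le_norm_of_opNorm_le_one hφ _

/-- If a Banach space `X` has the DSD2P, then it satisfies the slice characterization of
the Daugavet property: for every norm-one functional `f`, every `α > 0`, every `ε > 0`
and every `x` of norm one, there is `s` in the closed unit ball with
`Re (f s) > 1 - α` and `‖x - s‖ > 2 - ε`. -/
theorem dsd2p_implies_slice_daugavet {𝕜 : Type*} [RCLike 𝕜] {X : Type*}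
    [NormedAddCommGroup X] [NormedSpace 𝕜 X] [CompleteSpace X]
    (h : DSD2P 𝕜 X) (f : X →L[𝕜] 𝕜) (hf : ‖f‖ = 1) (α : ℝ) (hα : 0 < α)
    (ε : ℝ) (hε : 0 < ε) (x : X) (hx : ‖x‖ = 1) :
    ∃ s : X, ‖s‖ ≤ 1 ∧ 1 - α < RCLike.re (f s) ∧ 2 - ε < ‖x - s‖ :=
  dsd2p_implies_slice_daugavet_general h f hf α hα ε hε x hx
end

section
/- Let X be a Banach space with the diametral strong diameter two property (DSD2P). Then X is a space with bad projections: every rank-one bounded linear projection P : X → X (i.e. P ∘ P = P and the range of P is one-dimensional) satisfies ‖Id − P‖ ≥ 2. -/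
open Set

/-! A rank-one projection is `P = φ(·) • u` with `‖u‖ = 1 = φ u`, so `‖φ‖ ≥ 1`. The slice
`{re φ > 1 - ε}` of the unit ball contains `u`, so the DSD2P yields `y` in it with
`‖u - y‖ > 2 - ε`. A functional `g` of norm one norming `u - y` has `g y ≈ -1` and `g u ≈ 1`,
the latter within `√(2ε)` because `|g u| ≤ 1`. Hence
`‖(Id - P)(-y)‖ = ‖φ y • u - y‖ ≥ re g (φ y • u - y) ≥ 2 - 2ε - ‖φ‖ √(2ε)`, and `ε → 0`. -/

open RCLike Topology

section

variable {𝕜 : Type*} [RCLike 𝕜] {X : Type*} [NormedAddCommGroup X] [NormedSpace 𝕜 X]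

theorem isConvexCombOfSlices_ballSlice {f : X →L[𝕜] 𝕜} {α : ℝ} (hf : ‖f‖ = 1) (hα : 0 < α) :
    IsConvexCombOfSlices (𝕜 := 𝕜) X (ballSlice f α) := by
  refine ⟨1, one_pos, fun _ => f, fun _ => α, fun _ => 1, fun _ => hf, fun _ => hα,
    fun _ => one_pos, by simp, ?_⟩
  ext x
  constructor
  · intro hx
    exact ⟨fun _ => x, fun _ => hx, by simp⟩
  · rintro ⟨y, hy, rfl⟩
    simpa using hy 0

theorem DSD2P.exists_mem_ballSlice_lt_norm_sub (h : DSD2P 𝕜 X) {f : X →L[𝕜] 𝕜} {α : ℝ}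
    (hf : ‖f‖ = 1) (hα : 0 < α) {x : X} (hx : x ∈ ballSlice f α) {δ : ℝ} (hδ : 0 < δ) :
    ∃ y ∈ ballSlice f α, 1 + ‖x‖ - δ < ‖x - y‖ :=
  h _ (isConvexCombOfSlices_ballSlice hf hα) δ hδ x hx

theorem norm_sub_one_le_sqrt {z : 𝕜} {e : ℝ} (hz : ‖z‖ ≤ 1) (hre : 1 - e ≤ re z) :
    ‖z - 1‖ ≤ √(2 * e) := by
  have hsq : ‖z - 1‖ ^ 2 = ‖z‖ ^ 2 - 2 * re z + 1 := by
    simp only [norm_sq_eq_def, map_sub, one_re, one_im]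
    ring
  have hz0 : 0 ≤ ‖z‖ := norm_nonneg z
  simpa using Real.abs_le_sqrt (by nlinarith : ‖z - 1‖ ^ 2 ≤ 2 * e)

theorem two_sub_le_norm_smul_sub {u y : X} {c : 𝕜} {e t : ℝ} (hu : ‖u‖ ≤ 1) (hy : ‖y‖ ≤ 1)
    (huy : 2 - e ≤ ‖u - y‖) (hc : 1 - e ≤ re c) (hct : ‖c‖ ≤ t) :
    2 - 2 * e - t * √(2 * e) ≤ ‖c • u - y‖ := by
  obtain ⟨g, hg, hgu⟩ := exists_dual_vector'' 𝕜 (u - y)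
  have hg_ball : ∀ x : X, ‖x‖ ≤ 1 → ‖g x‖ ≤ 1 := fun x hx =>
    (g.le_opNorm x).trans (mul_le_one₀ hg (norm_nonneg x) hx)
  have hgu_sub : re (g u) - re (g y) = ‖u - y‖ := by
    simpa using congrArg re hgu
  have hgu_le := (re_le_norm (g u)).trans (hg_ball u hu)
  have hgy_ge : -1 ≤ re (g y) := by
    have := (abs_re_le_norm (g y)).trans (hg_ball y hy)
    linarith [neg_abs_le (re (g y))]
  have hgu_near : ‖g u - 1‖ ≤ √(2 * e) := norm_sub_one_le_sqrt (hg_ball u hu) (by linarith)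
  have hcgu : 1 - e - t * √(2 * e) ≤ re (c * g u) := by
    have hdev : ‖c * (g u - 1)‖ ≤ t * √(2 * e) := by
      rw [norm_mul]
      exact mul_le_mul hct hgu_near (norm_nonneg _) ((norm_nonneg c).trans hct)
    have := neg_le_of_abs_le ((abs_re_le_norm (c * (g u - 1))).trans hdev)
    have hsplit : c * g u = c + c * (g u - 1) := by ring
    rw [hsplit, map_add]
    linarith
  calc 2 - 2 * e - t * √(2 * e) ≤ re (g (c • u - y)) := by
        rw [map_sub, map_smul, smul_eq_mul, map_sub]
        linarith
    _ ≤ ‖g (c • u - y)‖ := re_le_norm _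
    _ ≤ ‖c • u - y‖ := (g.le_opNorm _).trans (mul_le_of_le_one_left (norm_nonneg _) hg)

theorem exists_eq_smul_of_finrank_range_eq_one {P : X →L[𝕜] X} (hP : P.comp P = P)
    (hrank : Module.finrank 𝕜 (LinearMap.range (P : X →ₗ[𝕜] X)) = 1) :
    ∃ (u : X) (φ : X →L[𝕜] 𝕜), ‖u‖ = 1 ∧ φ u = 1 ∧ ∀ z, P z = φ z • u := by
  have hne : LinearMap.range (P : X →ₗ[𝕜] X) ≠ ⊥ := by
    rintro hbot
    rw [hbot, finrank_bot] at hrank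
    exact zero_ne_one hrank
  obtain ⟨w, hw, hw0⟩ := Submodule.exists_mem_ne_zero_of_ne_bot hne
  set u : X := (‖w‖ : 𝕜)⁻¹ • w
  have hu : ‖u‖ = 1 := norm_smul_inv_norm hw0
  have hu_mem : u ∈ LinearMap.range (P : X →ₗ[𝕜] X) := Submodule.smul_mem _ _ hw
  have hspan := eq_span_singleton_of_mem_of_finrank_eq_one hrank hu_mem
    (norm_ne_zero_iff.mp (by simp [hu]))
  have hPu : P u = u := by
    obtain ⟨x, hx⟩ := hu_mem
    simpa [← hx] using DFunLike.congr_fun hP x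
  obtain ⟨g, -, hgu⟩ := exists_dual_vector'' 𝕜 u
  rw [hu, ofReal_one] at hgu
  refine ⟨u, g.comp P, hu, by simp [hPu, hgu], fun z => ?_⟩
  obtain ⟨c, hc⟩ := Submodule.mem_span_singleton.mp (hspan ▸ LinearMap.mem_range_self _ z :
    P z ∈ 𝕜 ∙ u)
  simp [← hc, hgu]

theorem DSD2P.two_sub_le_opNorm_id_sub (h : DSD2P 𝕜 X) {u : X} {φ : X →L[𝕜] 𝕜} {P : X →L[𝕜] X}
    (hu : ‖u‖ = 1) (hφu : φ u = 1) (hP : ∀ z, P z = φ z • u) {e : ℝ} (he : 0 < e) :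
    2 - 2 * e - ‖φ‖ * √(2 * e) ≤ ‖ContinuousLinearMap.id 𝕜 X - P‖ := by
  set t := ‖φ‖
  have ht : 1 ≤ t := by simpa [hφu, hu] using φ.le_opNorm u
  have ht0 : 0 < t := one_pos.trans_le ht
  set f : X →L[𝕜] 𝕜 := ((t⁻¹ : ℝ) : 𝕜) • φ
  have hf : ‖f‖ = 1 := by
    rw [norm_smul, norm_ofReal, abs_of_pos (inv_pos.mpr ht0), inv_mul_cancel₀ ht0.ne']
  have hre_f : ∀ z, re (f z) = t⁻¹ * re (φ z) := fun z => re_ofReal_mul _ _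
  -- `ballSlice f α` is the slice `{x | 1 - e < re (φ x)}` of the unit ball
  set α := 1 - t⁻¹ * (1 - e)
  have hα : 0 < α := by
    have : t⁻¹ * (1 - e) < 1 := by
      rw [inv_mul_lt_iff₀ ht0]
      linarith
    linarith
  have hu_slice : u ∈ ballSlice f α := by
    refine ⟨hu.le, ?_⟩
    rw [hre_f, hφu, one_re]
    nlinarith [inv_pos.mpr ht0]
  obtain ⟨y, ⟨hy, hy_re⟩, huy⟩ := h.exists_mem_ballSlice_lt_norm_sub hf hα hu_slice he
  have hφy : 1 - e ≤ re (φ y) := by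
    rw [hre_f] at hy_re
    exact (lt_of_mul_lt_mul_left (by linarith) (inv_nonneg.mpr ht0.le)).le
  have hφy_le : ‖φ y‖ ≤ t := (φ.le_opNorm y).trans (mul_le_of_le_one_right ht0.le hy)
  calc 2 - 2 * e - t * √(2 * e) ≤ ‖φ y • u - y‖ :=
        two_sub_le_norm_smul_sub hu.le hy (by linarith) hφy hφy_le
    _ = ‖(ContinuousLinearMap.id 𝕜 X - P) (-y)‖ := by
        congr 1
        simp only [sub_apply, ContinuousLinearMap.id_apply, map_neg, hP]
        abel
    _ ≤ ‖ContinuousLinearMap.id 𝕜 X - P‖ :=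
        (ContinuousLinearMap.le_opNorm _ _).trans
          (mul_le_of_le_one_right (norm_nonneg _) (by rwa [norm_neg]))

end

theorem dsd2p_implies_bad_projections_general {𝕜 : Type*} [RCLike 𝕜] {X : Type*}
    [NormedAddCommGroup X] [NormedSpace 𝕜 X]
    (h : DSD2P 𝕜 X) (P : X →L[𝕜] X) (hP : P.comp P = P)
    (hrank : Module.finrank 𝕜 (LinearMap.range (P : X →ₗ[𝕜] X)) = 1) :
    2 ≤ ‖ContinuousLinearMap.id 𝕜 X - P‖ := by
  obtain ⟨u, φ, hu, hφu, hPu⟩ := exists_eq_smul_of_finrank_range_eq_one hP hrank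
  have hlim : Filter.Tendsto (fun e : ℝ => 2 - 2 * e - ‖φ‖ * √(2 * e)) (𝓝[>] 0) (𝓝 2) := by
    have hcont : Continuous fun e : ℝ => 2 - 2 * e - ‖φ‖ * √(2 * e) := by fun_prop
    simpa using (hcont.tendsto 0).mono_left nhdsWithin_le_nhds
  exact le_of_tendsto hlim (eventually_mem_nhdsWithin.mono fun e he =>
    h.two_sub_le_opNorm_id_sub hu hφu hPu he)

/-- If a Banach space `X` has the DSD2P, then `X` is a space with bad projections:
every rank-one bounded linear projection `P : X → X` satisfies `‖Id - P‖ ≥ 2`. -/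
theorem dsd2p_implies_bad_projections {𝕜 : Type*} [RCLike 𝕜] {X : Type*}
    [NormedAddCommGroup X] [NormedSpace 𝕜 X] [CompleteSpace X]
    (h : DSD2P 𝕜 X) (P : X →L[𝕜] X) (hP : P.comp P = P)
    (hrank : Module.finrank 𝕜 (LinearMap.range (P : X →ₗ[𝕜] X)) = 1) :
    2 ≤ ‖ContinuousLinearMap.id 𝕜 X - P‖ :=
  dsd2p_implies_bad_projections_general h P hP hrank
end
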